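/- arXiv:2411.05953 — 5 statements merged into one kernel-verified Lean document; each statement's English description precedes it below -/
import Mathlib

section
/- Let p and q be positive integers, set ν = p/q, and let δ > 0. Then there exists a constant C > 0 such that for every integer m ≥ 0 and every integer n ≥ 1 one has |ξ_{m,n}| ≥ C·(n + m), where ξ_{m,n} := −ν²m² + n² + 1 + i·δ·m ∈ ℂ. -/
/-- The eigenvalue `ξ_{m,n} = -ν²m² + n² + 1 + i δ m` of the damped wave operator
`ℒ = ν²∂_t² - ∂_x² + δ∂_t + id`. -/
noncomputable def xi (ν δ : ℝ) (m n : ℕ) : ℂ :=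
  ((-(ν ^ 2) * (m : ℝ) ^ 2 + (n : ℝ) ^ 2 + 1 : ℝ) : ℂ) + ((δ * m : ℝ) : ℂ) * Complex.I

lemma xi_re (ν δ : ℝ) (m n : ℕ) :
    (xi ν δ m n).re = -(ν ^ 2) * (m : ℝ) ^ 2 + (n : ℝ) ^ 2 + 1 := by
  simp [xi, pow_two, Complex.mul_re, Complex.mul_im]

lemma xi_im (ν δ : ℝ) (m n : ℕ) : (xi ν δ m n).im = δ * m := by
  simp [xi, pow_two, Complex.mul_re, Complex.mul_im]

/-- Lemma 2.1: if `ν = p/q ∈ ℚ` and `δ > 0`, then there is `C > 0` with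
`|ξ_{m,n}| ≥ C (n + m)` for all `m ≥ 0`, `n ≥ 1`. -/
theorem stmt_0 (p q : ℕ) (hp : 0 < p) (hq : 0 < q) (ν δ : ℝ)
    (hν : ν = (p : ℝ) / q) (hδ : 0 < δ) :
    ∃ C : ℝ, 0 < C ∧ ∀ (m n : ℕ), 1 ≤ n →
      C * ((n : ℝ) + (m : ℝ)) ≤ ‖xi ν δ m n‖ := by
  have hν0 : 0 < ν := by
    rw [hν]
    have : (0:ℝ) < p := by exact_mod_cast hp
    have : (0:ℝ) < q := by exact_mod_cast hq
    positivity
  have hs2 : (0:ℝ) < Real.sqrt 2 := by positivity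
  refine ⟨min (ν / (ν + 1)) (δ / (Real.sqrt 2 * ν + 1)), lt_min (by positivity) (by positivity), ?_⟩
  intro m n hn
  set C := min (ν / (ν + 1)) (δ / (Real.sqrt 2 * ν + 1)) with hC
  have hC0 : 0 < C := lt_min (by positivity) (by positivity)
  have hn1 : (1:ℝ) ≤ (n:ℝ) := by exact_mod_cast hn
  have hm0 : (0:ℝ) ≤ (m:ℝ) := Nat.cast_nonneg m
  by_cases h : ν ^ 2 * (m:ℝ) ^ 2 ≤ ((n:ℝ) ^ 2 + 1) / 2
  · -- real part dominates
    have hre : (n:ℝ) ≤ (xi ν δ m n).re := by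
      rw [xi_re]; nlinarith
    have habs : (n:ℝ) ≤ ‖xi ν δ m n‖ :=
      hre.trans ((le_abs_self _).trans (Complex.abs_re_le_norm _))
    have hνm : ν * (m:ℝ) ≤ (n:ℝ) := by nlinarith
    have hC1 : C * (ν + 1) ≤ ν := by
      have := min_le_left (ν / (ν + 1)) (δ / (Real.sqrt 2 * ν + 1))
      rw [hC]
      calc C * (ν + 1) ≤ (ν / (ν + 1)) * (ν + 1) := by
            exact mul_le_mul_of_nonneg_right this (by linarith)
        _ = ν := by field_simp
    refine le_trans ?_ habs
    nlinarith
  · -- imaginary part dominates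
    push_neg at h
    have him : δ * (m:ℝ) ≤ ‖xi ν δ m n‖ := by
      have := (le_abs_self ((xi ν δ m n).im)).trans (Complex.abs_im_le_norm _)
      rwa [xi_im] at this
    have hnm : (n:ℝ) ≤ Real.sqrt 2 * ν * (m:ℝ) := by
      have h2 : (n:ℝ) ^ 2 < (Real.sqrt 2 * ν * (m:ℝ)) ^ 2 := by
        have : (Real.sqrt 2) ^ 2 = 2 := Real.sq_sqrt (by norm_num)
        nlinarith
      nlinarith [mul_nonneg (mul_nonneg hs2.le hν0.le) hm0]
    have hC2 : C * (Real.sqrt 2 * ν + 1) ≤ δ := by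
      have := min_le_right (ν / (ν + 1)) (δ / (Real.sqrt 2 * ν + 1))
      rw [hC]
      calc C * (Real.sqrt 2 * ν + 1) ≤ (δ / (Real.sqrt 2 * ν + 1)) * (Real.sqrt 2 * ν + 1) := by
            exact mul_le_mul_of_nonneg_right this (by positivity)
        _ = δ := by field_simp
    refine le_trans ?_ him
    nlinarith
end

section
/- Let ν ∈ ℝ and δ > 0. For every integer m ≥ 0 with δ·m < 2 and every integer n ≥ 1 with n² ≥ n + 4ν²/δ² + 1, one has |ξ_{m,n}| ≥ min(1, δ)·(n + m), where ξ_{m,n} := −ν²m² + n² + 1 + i·δ·m ∈ ℂ. -/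
/-- The small-frequency case `δm < 2`, `n² ≥ n + 4ν²/δ² + 1` in the proof of Lemma 2.1:
`|ξ_{m,n}| ≥ min(1, δ)(n + m)`. -/
theorem stmt_2 (ν δ : ℝ) (hδ : 0 < δ) (m n : ℕ) (hn : 1 ≤ n)
    (hdm : δ * m < 2) (hnbig : (n : ℝ) ^ 2 ≥ (n : ℝ) + 4 * ν ^ 2 / δ ^ 2 + 1) :
    min 1 δ * ((n : ℝ) + (m : ℝ)) ≤ ‖xi ν δ m n‖ := by
  set c := min 1 δ with hc
  have hc0 : 0 ≤ c := le_min zero_le_one hδ.le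
  have hc1 : c ≤ 1 := min_le_left _ _
  have hcδ : c ≤ δ := min_le_right _ _
  have hm0 : (0:ℝ) ≤ (m:ℝ) := Nat.cast_nonneg m
  have hn0 : (0:ℝ) ≤ (n:ℝ) := Nat.cast_nonneg n
  have hn1 : (1:ℝ) ≤ (n:ℝ) := by exact_mod_cast hn
  have hδm0 : 0 ≤ δ * m := mul_nonneg hδ.le hm0
  -- ν² m² ≤ 4 ν² / δ²
  have hνm : ν ^ 2 * (m:ℝ) ^ 2 ≤ 4 * ν ^ 2 / δ ^ 2 := by
    have h2 : (δ * m) ^ 2 ≤ 4 := by nlinarith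
    have h3 : ν ^ 2 * (δ * m) ^ 2 ≤ ν ^ 2 * 4 :=
      mul_le_mul_of_nonneg_left h2 (sq_nonneg ν)
    rw [le_div_iff₀ (by positivity)]
    nlinarith
  have hRe : (n:ℝ) + 2 ≤ -(ν ^ 2) * (m:ℝ) ^ 2 + (n:ℝ) ^ 2 + 1 := by nlinarith
  have hcm : c * m ≤ 2 := by nlinarith
  have hgoal0 : 0 ≤ c * ((n:ℝ) + m) := by positivity
  have habs : ‖xi ν δ m n‖ =
      Real.sqrt ((-(ν ^ 2) * (m:ℝ) ^ 2 + (n:ℝ) ^ 2 + 1) ^ 2 + (δ * m) ^ 2) := by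
    rw [xi, Complex.norm_add_mul_I]
  have habs2 : ‖xi ν δ m n‖ ^ 2 =
      (-(ν ^ 2) * (m:ℝ) ^ 2 + (n:ℝ) ^ 2 + 1) ^ 2 + (δ * m) ^ 2 := by
    rw [habs, Real.sq_sqrt (by positivity)]
  have hcn : c * n ≤ (n:ℝ) := by
    have := mul_le_mul_of_nonneg_right hc1 hn0
    linarith
  have hcmδ : c * m ≤ δ * m := mul_le_mul_of_nonneg_right hcδ hm0
  have e1 : (c * n) ^ 2 ≤ (n:ℝ) ^ 2 := pow_le_pow_left₀ (mul_nonneg hc0 hn0) hcn 2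
  have e2 : (c * m) ^ 2 ≤ (δ * m) ^ 2 := pow_le_pow_left₀ (mul_nonneg hc0 hm0) hcmδ 2
  have e3 : 2 * (c * n) * (c * m) ≤ 4 * n := by
    have := mul_le_mul hcn hcm (mul_nonneg hc0 hm0) hn0
    linarith
  have e4 : ((n:ℝ) + 2) ^ 2 ≤ (-(ν ^ 2) * (m:ℝ) ^ 2 + (n:ℝ) ^ 2 + 1) ^ 2 :=
    pow_le_pow_left₀ (by positivity) hRe 2
  have expand : (c * ((n:ℝ) + m)) ^ 2 = (c * n) ^ 2 + 2 * (c * n) * (c * m) + (c * m) ^ 2 := by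
    ring
  have expand2 : ((n:ℝ) + 2) ^ 2 = (n:ℝ) ^ 2 + 4 * n + 4 := by ring
  have hsq : (c * ((n:ℝ) + m)) ^ 2 ≤ ‖xi ν δ m n‖ ^ 2 := by
    rw [habs2, expand]; linarith
  exact le_of_sq_le_sq (by simpa [sq] using hsq) (norm_nonneg _)
end

section
/- Let ν ∈ ℝ, δ > 0, and suppose C > 0 satisfies |ξ_{m,n}| ≥ C·(m + n) for all integers m ≥ 0 and n ≥ 1, where ξ_{m,n} := −ν²m² + n² + 1 + i·δ·m ∈ ℂ. Then for every doubly indexed family of complex numbers c : {m ∈ ℤ : m ≥ 0} × {n ∈ ℤ : n ≥ 1} → ℂ, the inequality Σ_{m≥0, n≥1} |c_{m,n}|²·(m² + n² + 1)²/|ξ_{m,n}|² ≤ (2/C²)·Σ_{m≥0, n≥1} |c_{m,n}|²·(m² + n² + 1) holds, where both sums are interpreted in the extended nonnegative reals [0, ∞]. -/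
/-- Lemma 2.2: if `|ξ_{m,n}| ≥ C(m+n)` for all `m ≥ 0`, `n ≥ 1`, then for any Fourier
coefficients `c_{m,n}` one has
`Σ |c_{m,n}|²(m²+n²+1)²/|ξ_{m,n}|² ≤ (2/C²) Σ |c_{m,n}|²(m²+n²+1)`,
i.e. `‖ℒ⁻¹u‖²_𝓗 ≤ (2/C²)‖u‖²_{H¹}` (sums taken in `ℝ≥0∞`). -/
theorem stmt_4 (ν δ C : ℝ) (hδ : 0 < δ) (hC : 0 < C)
    (h : ∀ (m n : ℕ), 1 ≤ n → C * ((m : ℝ) + (n : ℝ)) ≤ ‖xi ν δ m n‖)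
    (c : ℕ → {n : ℕ // 1 ≤ n} → ℂ) :
    ∑' (m : ℕ) (n : {n : ℕ // 1 ≤ n}),
        ENNReal.ofReal ((‖c m n‖) ^ 2 *
          ((m : ℝ) ^ 2 + ((n : ℕ) : ℝ) ^ 2 + 1) ^ 2 / (‖xi ν δ m (n : ℕ)‖) ^ 2)
      ≤ ENNReal.ofReal (2 / C ^ 2) *
        ∑' (m : ℕ) (n : {n : ℕ // 1 ≤ n}),
          ENNReal.ofReal ((‖c m n‖) ^ 2 *
            ((m : ℝ) ^ 2 + ((n : ℕ) : ℝ) ^ 2 + 1)) := by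
  rw [← ENNReal.tsum_mul_left]
  refine ENNReal.tsum_le_tsum fun m => ?_
  rw [← ENNReal.tsum_mul_left]
  refine ENNReal.tsum_le_tsum fun n => ?_
  rw [← ENNReal.ofReal_mul (by positivity)]
  refine ENNReal.ofReal_le_ofReal ?_
  obtain ⟨n, hn⟩ := n
  have h1 : C * ((m : ℝ) + (n : ℝ)) ≤ ‖xi ν δ m n‖ := h m n hn
  have hn1 : (1 : ℝ) ≤ (n : ℝ) := by exact_mod_cast hn
  have hm0 : (0 : ℝ) ≤ (m : ℝ) := Nat.cast_nonneg m
  have hX : 0 < ‖xi ν δ m n‖ := lt_of_lt_of_le (by positivity) h1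
  have key : ((m : ℝ) ^ 2 + (n : ℝ) ^ 2 + 1) / (‖xi ν δ m n‖) ^ 2 ≤ 2 / C ^ 2 := by
    rw [div_le_div_iff₀ (by positivity) (by positivity)]
    have h2 : (C * ((m : ℝ) + (n : ℝ))) ^ 2 ≤ (‖xi ν δ m n‖) ^ 2 := by
      apply pow_le_pow_left₀ (by positivity) h1
    calc ((m : ℝ) ^ 2 + (n : ℝ) ^ 2 + 1) * C ^ 2
        ≤ 2 * (C * ((m : ℝ) + (n : ℝ))) ^ 2 := by
          have hk : (m : ℝ) ^ 2 + (n : ℝ) ^ 2 + 1 ≤ 2 * ((m : ℝ) + (n : ℝ)) ^ 2 := by nlinarith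
          nlinarith [mul_le_mul_of_nonneg_right hk (sq_nonneg C)]
      _ ≤ 2 * (‖xi ν δ m n‖) ^ 2 := by nlinarith
  calc ‖c m ⟨n, hn⟩‖ ^ 2 * ((m : ℝ) ^ 2 + (n : ℝ) ^ 2 + 1) ^ 2 /
        (‖xi ν δ m n‖) ^ 2
      = (((m : ℝ) ^ 2 + (n : ℝ) ^ 2 + 1) / (‖xi ν δ m n‖) ^ 2) *
        (‖c m ⟨n, hn⟩‖ ^ 2 * ((m : ℝ) ^ 2 + (n : ℝ) ^ 2 + 1)) := by ring
    _ ≤ 2 / C ^ 2 * (‖c m ⟨n, hn⟩‖ ^ 2 * ((m : ℝ) ^ 2 + (n : ℝ) ^ 2 + 1)) := by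
        apply mul_le_mul_of_nonneg_right key (by positivity)
end

section
/- Let (Ω, μ) be a measure space with μ(Ω) < ∞, let V be a finite-dimensional real normed vector space, let a > 0 and let η₀, η be real numbers with 2 < η₀ < η. Suppose f : V → V satisfies ‖f(x)‖ ≤ a·‖x‖^{η₀/2} for all x ∈ V. Then for every ε > 0 there exists δ > 0 such that every measurable v : Ω → V with 0 < ‖v‖_{L^η(μ)} < δ satisfies ‖f ∘ v‖_{L²(μ)} ≤ ε·‖v‖_{L^η(μ)}; that is, the superposition operator v ↦ f ∘ v from L^η(Ω, μ; V) to L²(Ω, μ; V) is o(‖v‖_{L^η}) as ‖v‖_{L^η} → 0. -/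
open MeasureTheory ENNReal

/-- The little-o condition (2.17) for the Nemytskii operator: for `‖f(x)‖ ≤ a‖x‖^{η₀/2}`
with `2 < η₀ < η` and `μ(Ω) < ∞`, the map `v ↦ f ∘ v` from `L^η` to `L²` is
`o(‖v‖_{L^η})` as `‖v‖_{L^η} → 0`. -/
theorem stmt_7 {Ω : Type*} [MeasurableSpace Ω] (μ : Measure Ω) (hμ : μ Set.univ < ⊤)
    {V : Type*} [NormedAddCommGroup V] [NormedSpace ℝ V] [FiniteDimensional ℝ V]
    [MeasurableSpace V] [BorelSpace V]
    (a η₀ η : ℝ) (ha : 0 < a) (hη₀ : 2 < η₀) (hη : η₀ < η)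
    (f : V → V) (hf : ∀ x : V, ‖f x‖ ≤ a * ‖x‖ ^ (η₀ / 2)) :
    ∀ ε > 0, ∃ δ > 0, ∀ v : Ω → V, Measurable v →
      0 < eLpNorm v (ENNReal.ofReal η) μ →
      eLpNorm v (ENNReal.ofReal η) μ < ENNReal.ofReal δ →
      eLpNorm (f ∘ v) 2 μ ≤ ENNReal.ofReal ε * eLpNorm v (ENNReal.ofReal η) μ := by
  intro ε hε
  have hη₀0 : (0:ℝ) < η₀ := by linarith
  have hη0 : (0:ℝ) < η := by linarith
  have hexp : (0:ℝ) < η₀ / 2 - 1 := by linarith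
  -- the constant
  set C : ENNReal := μ Set.univ ^ (1 / η₀ - 1 / η) with hC
  have hCfin : C ≠ ⊤ := by
    apply ENNReal.rpow_ne_top_of_nonneg
    · have : 1 / η < 1 / η₀ := by
        apply one_div_lt_one_div_of_lt hη₀0 hη
      linarith
    · exact hμ.ne
  set c : ℝ := (C ^ (η₀ / 2)).toReal with hc
  have hc0 : 0 ≤ c := ENNReal.toReal_nonneg
  set δ : ℝ := min 1 ((ε / (a * c + 1)) ^ (2 / (η₀ - 2))) with hδdef
  have hac1 : 0 < a * c + 1 := by positivity
  have hδpos : 0 < δ := by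
    apply lt_min one_pos
    exact Real.rpow_pos_of_pos (div_pos hε hac1) _
  refine ⟨δ, hδpos, ?_⟩
  intro v hv hN hNδ
  set N : ℝ≥0∞ := eLpNorm v (ENNReal.ofReal η) μ with hNdef
  have hNtop : N ≠ ⊤ := (hNδ.trans_le le_top).ne
  -- Step 1: pointwise bound
  have step1 : eLpNorm (f ∘ v) 2 μ ≤
      eLpNorm (fun x => a * ‖v x‖ ^ (η₀ / 2)) 2 μ := by
    apply eLpNorm_mono
    intro x
    calc ‖(f ∘ v) x‖ ≤ a * ‖v x‖ ^ (η₀ / 2) := hf (v x)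
      _ ≤ ‖a * ‖v x‖ ^ (η₀ / 2)‖ := le_abs_self _
  -- Step 2: pull out the constant
  have step2 : eLpNorm (fun x => a * ‖v x‖ ^ (η₀ / 2)) 2 μ =
      ENNReal.ofReal a * eLpNorm (fun x => ‖v x‖ ^ (η₀ / 2)) 2 μ := by
    have heq : (fun x => a * ‖v x‖ ^ (η₀ / 2)) = a • (fun x => ‖v x‖ ^ (η₀ / 2)) := rfl
    rw [heq, eLpNorm_const_smul (a : ℝ) (fun x => ‖v x‖ ^ (η₀ / 2)) 2 μ]
    congr 1
    rw [← ofReal_norm, Real.norm_eq_abs, abs_of_pos ha]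
  -- Step 3: rpow of the norm
  have step3 : eLpNorm (fun x => ‖v x‖ ^ (η₀ / 2)) 2 μ =
      eLpNorm v (ENNReal.ofReal η₀) μ ^ (η₀ / 2) := by
    rw [eLpNorm_norm_rpow v (by linarith : (0:ℝ) < η₀ / 2)]
    congr 2
    rw [show (2 : ℝ≥0∞) = ENNReal.ofReal 2 by simp,
      ← ENNReal.ofReal_mul (by norm_num : (0:ℝ) ≤ 2)]
    congr 1
    ring
  -- Step 4: compare exponents
  have step4 : eLpNorm v (ENNReal.ofReal η₀) μ ≤ N * C := by
    have h := eLpNorm_le_eLpNorm_mul_rpow_measure_univ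
      (ENNReal.ofReal_le_ofReal hη.le) hv.aestronglyMeasurable (f := v) (μ := μ)
    rwa [ENNReal.toReal_ofReal hη₀0.le, ENNReal.toReal_ofReal hη0.le] at h
  -- combine
  have hNC : (N * C) ^ (η₀ / 2) ≤ N * ((ENNReal.ofReal δ) ^ (η₀ / 2 - 1) * C ^ (η₀ / 2)) := by
    rw [ENNReal.mul_rpow_of_nonneg _ _ (by linarith : (0:ℝ) ≤ η₀ / 2)]
    have hN1 : N ^ (η₀ / 2) ≤ N * (ENNReal.ofReal δ) ^ (η₀ / 2 - 1) := by
      have : N ^ (η₀ / 2) = N * N ^ (η₀ / 2 - 1) := by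
        rw [show N ^ (η₀ / 2) = N ^ (1 + (η₀ / 2 - 1)) from by congr 1; ring,
          ENNReal.rpow_add _ _ hN.ne' hNtop, ENNReal.rpow_one]
      rw [this]
      exact mul_le_mul_right (ENNReal.rpow_le_rpow hNδ.le hexp.le) _
    calc N ^ (η₀ / 2) * C ^ (η₀ / 2)
        ≤ N * (ENNReal.ofReal δ) ^ (η₀ / 2 - 1) * C ^ (η₀ / 2) :=
          mul_le_mul_left hN1 _
      _ = N * ((ENNReal.ofReal δ) ^ (η₀ / 2 - 1) * C ^ (η₀ / 2)) := by ring
  -- the constant bound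
  have hconst : ENNReal.ofReal a * ((ENNReal.ofReal δ) ^ (η₀ / 2 - 1) * C ^ (η₀ / 2))
      ≤ ENNReal.ofReal ε := by
    rw [ENNReal.ofReal_rpow_of_nonneg hδpos.le hexp.le,
      show C ^ (η₀ / 2) = ENNReal.ofReal c by rw [hc, ENNReal.ofReal_toReal
        (ENNReal.rpow_ne_top_of_nonneg (by linarith) hCfin)],
      ← ENNReal.ofReal_mul (by positivity),
      ← ENNReal.ofReal_mul ha.le]
    apply ENNReal.ofReal_le_ofReal
    have hδle : δ ^ (η₀ / 2 - 1) ≤ ε / (a * c + 1) := by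
      have h1 : δ ≤ (ε / (a * c + 1)) ^ (2 / (η₀ - 2)) := min_le_right _ _
      calc δ ^ (η₀ / 2 - 1)
          ≤ ((ε / (a * c + 1)) ^ (2 / (η₀ - 2))) ^ (η₀ / 2 - 1) :=
            Real.rpow_le_rpow hδpos.le h1 hexp.le
        _ = (ε / (a * c + 1)) ^ ((2 / (η₀ - 2)) * (η₀ / 2 - 1)) := by
            rw [← Real.rpow_mul (by positivity)]
        _ = ε / (a * c + 1) := by
            rw [show (2 / (η₀ - 2)) * (η₀ / 2 - 1) = 1 by
              have h2 : η₀ - 2 ≠ 0 := by intro h; linarith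
              field_simp, Real.rpow_one]
    calc a * (δ ^ (η₀ / 2 - 1) * c) ≤ a * (ε / (a * c + 1) * c) := by
          apply mul_le_mul_of_nonneg_left _ ha.le
          exact mul_le_mul_of_nonneg_right hδle hc0
      _ = ε * (a * c) / (a * c + 1) := by ring
      _ ≤ ε := by
          rw [div_le_iff₀ hac1]
          nlinarith [mul_nonneg ha.le hc0]
  calc eLpNorm (f ∘ v) 2 μ
      ≤ ENNReal.ofReal a * eLpNorm v (ENNReal.ofReal η₀) μ ^ (η₀ / 2) := by
        rw [← step3, ← step2]; exact step1
    _ ≤ ENNReal.ofReal a * (N * C) ^ (η₀ / 2) := by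
        exact mul_le_mul_right (ENNReal.rpow_le_rpow step4 (by linarith)) _
    _ ≤ ENNReal.ofReal a * (N * ((ENNReal.ofReal δ) ^ (η₀ / 2 - 1) * C ^ (η₀ / 2))) :=
        mul_le_mul_right hNC _
    _ = (ENNReal.ofReal a * ((ENNReal.ofReal δ) ^ (η₀ / 2 - 1) * C ^ (η₀ / 2))) * N := by
        ring
    _ ≤ ENNReal.ofReal ε * N := mul_le_mul_left hconst _
end

section
/- Let ν, δ, τ be real numbers with δ > 0 and τ/π irrational, let ζ : ℝ → ℝ be continuous and strictly monotone, let r be a positive integer and z : {0, …, r} → ℝ a function with z(j) ≥ 0 for each j. Then the set Λ := { (α, β) ∈ ℝ × ℝ : there exist an odd positive integer m, a positive integer n, and j ∈ {0, …, r} such that β·sin(mτ) = δm and ζ(α)·(z(j) + 1)·sin(mτ) = (ν²m² − n²)·sin(mτ) − δm·cos(mτ) } is a discrete subset of ℝ² (it has no accumulation point in ℝ²). -/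
open Filter Metric Set

private lemma sin_nat_mul_ne_zero {τ : ℝ} (hτ : Irrational (τ / Real.pi)) {m : ℕ} (hm : 0 < m) :
    Real.sin ((m : ℝ) * τ) ≠ 0 := by
  intro h
  rw [Real.sin_eq_zero_iff] at h
  obtain ⟨k, hk⟩ := h
  apply hτ
  refine ⟨(k : ℚ) / (m : ℚ), ?_⟩
  have hπ : (Real.pi : ℝ) ≠ 0 := Real.pi_ne_zero
  have hm' : (m : ℝ) ≠ 0 := Nat.cast_ne_zero.2 hm.ne'
  push_cast
  rw [div_eq_div_iff hm' hπ]
  linarith [hk]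

/-- Lemma 4.1: under (D₁) (ζ differentiable... here continuous and strictly monotone) and
(D₂) (τ ∉ πℚ), the set of 𝑯-fixed critical parameter values is discrete in ℝ². -/
theorem stmt_10 (ν δ τ : ℝ) (hδ : 0 < δ) (hτ : Irrational (τ / Real.pi))
    (ζ : ℝ → ℝ) (hζc : Continuous ζ) (hζm : StrictMono ζ ∨ StrictAnti ζ)
    (r : ℕ) (hr : 0 < r) (z : ℕ → ℝ) (hz : ∀ j ≤ r, 0 ≤ z j) :
    ∀ x : ℝ × ℝ, ¬ AccPt x (Filter.principal
      {p : ℝ × ℝ | ∃ m n j : ℕ, Odd m ∧ 0 < m ∧ 0 < n ∧ j ≤ r ∧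
        p.2 * Real.sin ((m : ℝ) * τ) = δ * m ∧
        ζ p.1 * (z j + 1) * Real.sin ((m : ℝ) * τ) =
          (ν ^ 2 * (m : ℝ) ^ 2 - (n : ℝ) ^ 2) * Real.sin ((m : ℝ) * τ) -
            δ * m * Real.cos ((m : ℝ) * τ)}) := by
  intro x hx
  set S : Set (ℝ × ℝ) := {p : ℝ × ℝ | ∃ m n j : ℕ, Odd m ∧ 0 < m ∧ 0 < n ∧ j ≤ r ∧
        p.2 * Real.sin ((m : ℝ) * τ) = δ * m ∧
        ζ p.1 * (z j + 1) * Real.sin ((m : ℝ) * τ) =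
          (ν ^ 2 * (m : ℝ) ^ 2 - (n : ℝ) ^ 2) * Real.sin ((m : ℝ) * τ) -
            δ * m * Real.cos ((m : ℝ) * τ)} with hSdef
  rw [accPt_iff_nhds] at hx
  have hζinj : Function.Injective ζ := by
    rcases hζm with h | h
    · exact h.injective
    · exact h.injective
  -- bounds
  set B : ℝ := |x.2| + 1 with hB
  obtain ⟨C, hC⟩ := (isCompact_closedBall x.1 1).exists_bound_of_continuousOn
    hζc.continuousOn
  have hC0 : 0 ≤ C := le_trans (norm_nonneg _) (hC x.1 (mem_closedBall_self zero_le_one))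
  set Z : ℝ := (Finset.range (r + 1)).sup' ⟨0, by simp⟩ (fun j => z j + 1) with hZ
  have hZle : ∀ j ≤ r, z j + 1 ≤ Z := by
    intro j hj
    exact Finset.le_sup' (f := fun j => z j + 1) (Finset.mem_range.2 (Nat.lt_succ_of_le hj))
  set M : ℕ := ⌈B / δ⌉₊ with hM
  set s : ℝ := (Finset.Icc 1 (M + 1)).inf' ⟨1, by simp⟩ (fun m => |Real.sin ((m : ℝ) * τ)|)
    with hs
  have hs0 : 0 < s := by
    rw [hs]; refine (Finset.lt_inf'_iff ..).2 ?_
    intro i hi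
    rw [Finset.mem_Icc] at hi
    exact abs_pos.2 (sin_nat_mul_ne_zero hτ hi.1)
  have hsle : ∀ m : ℕ, 1 ≤ m → m ≤ M → s ≤ |Real.sin ((m : ℝ) * τ)| := by
    intro m h1 h2
    exact Finset.inf'_le _ (Finset.mem_Icc.2 ⟨h1, h2.trans (Nat.le_succ _)⟩)
  set D : ℝ := ν ^ 2 * (M : ℝ) ^ 2 + δ * M + C * Z with hD
  set N : ℕ := ⌈Real.sqrt (D / s)⌉₊ with hN
  -- finiteness of S near x
  have hfin : (S ∩ closedBall x 1).Finite := by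
    have hsub : S ∩ closedBall x 1 ⊆
        ⋃ m ∈ Finset.Icc 1 M, ⋃ n ∈ Finset.Icc 1 N, ⋃ j ∈ Finset.range (r + 1),
          {p : ℝ × ℝ | p.2 * Real.sin ((m : ℝ) * τ) = δ * m ∧
            ζ p.1 * (z j + 1) * Real.sin ((m : ℝ) * τ) =
              (ν ^ 2 * (m : ℝ) ^ 2 - (n : ℝ) ^ 2) * Real.sin ((m : ℝ) * τ) -
                δ * m * Real.cos ((m : ℝ) * τ)} := by
      rintro p ⟨⟨m, n, j, hodd, hm, hn, hj, heq1, heq2⟩, hpball⟩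
      have hd1 : dist p.1 x.1 ≤ 1 := by
        have := mem_closedBall.1 hpball
        rw [Prod.dist_eq] at this
        exact le_trans (le_max_left _ _) this
      have hd2 : dist p.2 x.2 ≤ 1 := by
        have := mem_closedBall.1 hpball
        rw [Prod.dist_eq] at this
        exact le_trans (le_max_right _ _) this
      have hp2 : |p.2| ≤ B := by
        have : |p.2 - x.2| ≤ 1 := by rwa [Real.dist_eq] at hd2
        have := abs_sub_abs_le_abs_sub p.2 x.2
        rw [hB]; linarith
      have hζb : |ζ p.1| ≤ C := by
        have : p.1 ∈ closedBall x.1 1 := mem_closedBall.2 hd1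
        simpa [Real.norm_eq_abs] using hC p.1 this
      have hsin1 : |Real.sin ((m : ℝ) * τ)| ≤ 1 := Real.abs_sin_le_one _
      have hcos1 : |Real.cos ((m : ℝ) * τ)| ≤ 1 := Real.abs_cos_le_one _
      -- m ≤ M
      have hmM : m ≤ M := by
        have h1 : δ * m ≤ B := by
          have := abs_mul p.2 (Real.sin ((m : ℝ) * τ))
          have h2 : |δ * m| ≤ B := by
            rw [← heq1, abs_mul]
            calc |p.2| * |Real.sin ((m : ℝ) * τ)| ≤ B * 1 :=
              mul_le_mul hp2 hsin1 (abs_nonneg _) (by rw [hB]; positivity)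
            _ = B := mul_one B
          have h3 : 0 ≤ δ * m := by positivity
          rwa [abs_of_nonneg h3] at h2
        have h4 : (m : ℝ) ≤ B / δ := by
          rw [le_div_iff₀ hδ]; linarith
        have h5 : (m : ℝ) ≤ (M : ℝ) := h4.trans (Nat.le_ceil _)
        exact_mod_cast h5
      have hzj : 0 ≤ z j := hz j hj
      have hzZ : z j + 1 ≤ Z := hZle j hj
      -- n ≤ N
      have hnN : n ≤ N := by
        have hsm : s ≤ |Real.sin ((m : ℝ) * τ)| := hsle m hm hmM
        have key : (n : ℝ) ^ 2 * |Real.sin ((m : ℝ) * τ)| ≤ D := by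
          have heq3 : (n : ℝ) ^ 2 * Real.sin ((m : ℝ) * τ) =
              ν ^ 2 * (m : ℝ) ^ 2 * Real.sin ((m : ℝ) * τ) -
                δ * m * Real.cos ((m : ℝ) * τ) -
                ζ p.1 * (z j + 1) * Real.sin ((m : ℝ) * τ) := by linarith [heq2]
          have habs : |(n : ℝ) ^ 2 * Real.sin ((m : ℝ) * τ)| ≤
              |ν ^ 2 * (m : ℝ) ^ 2 * Real.sin ((m : ℝ) * τ)| +
              |δ * m * Real.cos ((m : ℝ) * τ)| +
              |ζ p.1 * (z j + 1) * Real.sin ((m : ℝ) * τ)| := by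
            rw [heq3]
            exact (abs_sub _ _).trans (by gcongr; exact abs_sub _ _)
          have hb1 : |ν ^ 2 * (m : ℝ) ^ 2 * Real.sin ((m : ℝ) * τ)| ≤ ν ^ 2 * (M : ℝ) ^ 2 := by
            rw [abs_mul]
            have hmc : (m : ℝ) ≤ (M : ℝ) := Nat.cast_le.2 hmM
            have : |ν ^ 2 * (m : ℝ) ^ 2| = ν ^ 2 * (m : ℝ) ^ 2 := abs_of_nonneg (by positivity)
            rw [this]
            calc ν ^ 2 * (m : ℝ) ^ 2 * |Real.sin ((m : ℝ) * τ)| ≤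
                ν ^ 2 * (M : ℝ) ^ 2 * 1 := by
                  gcongr
              _ = ν ^ 2 * (M : ℝ) ^ 2 := mul_one _
          have hb2 : |δ * m * Real.cos ((m : ℝ) * τ)| ≤ δ * M := by
            rw [abs_mul]
            have : |δ * (m : ℝ)| = δ * m := abs_of_nonneg (by positivity)
            rw [this]
            have hmc : (m : ℝ) ≤ (M : ℝ) := Nat.cast_le.2 hmM
            calc δ * (m : ℝ) * |Real.cos ((m : ℝ) * τ)| ≤ δ * (M : ℝ) * 1 := by
                  gcongr
              _ = δ * M := mul_one _
          have hb3 : |ζ p.1 * (z j + 1) * Real.sin ((m : ℝ) * τ)| ≤ C * Z := by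
            rw [abs_mul, abs_mul]
            have h1 : |z j + 1| = z j + 1 := abs_of_nonneg (by linarith)
            rw [h1]
            have hZ0 : (0:ℝ) ≤ Z := by
              have := hz 0 (Nat.zero_le r); have := hZle 0 (Nat.zero_le r); linarith
            calc |ζ p.1| * (z j + 1) * |Real.sin ((m : ℝ) * τ)| ≤ C * Z * 1 := by
                  gcongr <;> first | positivity | linarith
              _ = C * Z := mul_one _
          have : |(n : ℝ) ^ 2 * Real.sin ((m : ℝ) * τ)| =
              (n : ℝ) ^ 2 * |Real.sin ((m : ℝ) * τ)| := by
            rw [abs_mul, abs_of_nonneg (by positivity : (0:ℝ) ≤ (n : ℝ) ^ 2)]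
          rw [this] at habs
          rw [hD]; linarith
        have hn2 : (n : ℝ) ^ 2 ≤ D / s := by
          rw [le_div_iff₀ hs0]
          calc (n : ℝ) ^ 2 * s ≤ (n : ℝ) ^ 2 * |Real.sin ((m : ℝ) * τ)| := by
                gcongr
            _ ≤ D := key
        have hD0 : 0 ≤ D / s := le_trans (by positivity) hn2
        have : (n : ℝ) ≤ Real.sqrt (D / s) :=
          (Real.le_sqrt (Nat.cast_nonneg _) hD0).2 hn2
        have h5 : (n : ℝ) ≤ (N : ℝ) := this.trans (Nat.le_ceil _)
        exact_mod_cast h5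
      refine Set.mem_biUnion (Finset.mem_Icc.2 ⟨hm, hmM⟩) ?_
      refine Set.mem_biUnion (Finset.mem_Icc.2 ⟨hn, hnN⟩) ?_
      refine Set.mem_biUnion (Finset.mem_range.2 (Nat.lt_succ_of_le hj)) ?_
      exact ⟨heq1, heq2⟩
    refine Set.Finite.subset ?_ hsub
    refine Set.Finite.biUnion (Finset.Icc 1 M).finite_toSet (fun m hm => ?_)
    refine Set.Finite.biUnion (Finset.Icc 1 N).finite_toSet (fun n hn => ?_)
    refine Set.Finite.biUnion (Finset.range (r + 1)).finite_toSet (fun j hj => ?_)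
    -- each such set is a subsingleton
    apply Set.Subsingleton.finite
    rintro p ⟨hp1, hp2⟩ q ⟨hq1, hq2⟩
    have hm1 : 1 ≤ m := (Finset.mem_Icc.1 hm).1
    have hjr : j ≤ r := Nat.lt_succ_iff.1 (Finset.mem_range.1 hj)
    have hsne : Real.sin ((m : ℝ) * τ) ≠ 0 := sin_nat_mul_ne_zero hτ hm1
    have hzne : z j + 1 ≠ 0 := by have := hz j hjr; linarith
    have h2 : p.2 = q.2 := by
      have : p.2 * Real.sin ((m : ℝ) * τ) = q.2 * Real.sin ((m : ℝ) * τ) := by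
        rw [hp1, hq1]
      exact mul_right_cancel₀ hsne this
    have h1 : p.1 = q.1 := by
      have hζeq : ζ p.1 * (z j + 1) * Real.sin ((m : ℝ) * τ) =
          ζ q.1 * (z j + 1) * Real.sin ((m : ℝ) * τ) := by rw [hp2, hq2]
      have : ζ p.1 = ζ q.1 := by
        have h3 := mul_right_cancel₀ hsne hζeq
        exact mul_right_cancel₀ hzne h3
      exact hζinj this
    exact Prod.ext h1 h2
  -- derive contradiction
  have hfin' : ((S ∩ closedBall x 1) \ {x}).Finite := hfin.diff
  have hclosed : IsClosed ((S ∩ closedBall x 1) \ {x}) := hfin'.isClosed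
  have hxnot : x ∈ ((S ∩ closedBall x 1) \ {x})ᶜ := by simp
  have hU : ((S ∩ closedBall x 1) \ {x})ᶜ ∈ nhds x :=
    hclosed.isOpen_compl.mem_nhds hxnot
  obtain ⟨y, ⟨hyU, hyS⟩, hyne⟩ :=
    hx (((S ∩ closedBall x 1) \ {x})ᶜ ∩ closedBall x 1)
      (Filter.inter_mem hU (closedBall_mem_nhds x one_pos))
  exact hyU.1 ⟨⟨hyS, hyU.2⟩, hyne⟩
end
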